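/- arXiv:2501.17007 — 8 statements merged into one kernel-verified Lean document; each statement's English description precedes it below -/
import Mathlib

section
/- For α, β > 0 with α ≠ β and x, y, u, v > 0, the pair (u,v) equals F^{(α,β)}(x,y) if and only if the three identities xy/((1+x)(1+y)) = uv/((1+u)(1+v)), αx/((1+αx)(1+y)) = βv/((1+u)(1+βv)), and βy/((1+x)(1+βy)) = αu/((1+αu)(1+v)) hold simultaneously. -/
/-- The quadrirational Yang–Baxter map `F^{(α,β)}`. -/
noncomputable def Fab (α β : ℝ) (x y : ℝ) : ℝ × ℝ :=
  (y / α * ((β + α * x + β * y + α * β * x * y) / (1 + x + y + β * x * y)),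
   x / β * ((α + α * x + β * y + α * β * x * y) / (1 + x + y + α * x * y)))

theorem stmt0 (α β x y u v : ℝ) (hα : 0 < α) (hβ : 0 < β) (hαβ : α ≠ β)
    (hx : 0 < x) (hy : 0 < y) (hu : 0 < u) (hv : 0 < v) :
    (u, v) = Fab α β x y ↔
      (x * y / ((1 + x) * (1 + y)) = u * v / ((1 + u) * (1 + v)) ∧
       α * x / ((1 + α * x) * (1 + y)) = β * v / ((1 + u) * (1 + β * v)) ∧
       β * y / ((1 + x) * (1 + β * y)) = α * u / ((1 + α * u) * (1 + v))) := by
  have hα0 : α ≠ 0 := ne_of_gt hα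
  have hβ0 : β ≠ 0 := ne_of_gt hβ
  have hQa : (0:ℝ) < 1 + x + y + α * x * y := by positivity
  have hQb : (0:ℝ) < 1 + x + y + β * x * y := by positivity
  have hQa0 : (1 + x + y + α * x * y) ≠ 0 := ne_of_gt hQa
  have hQb0 : (1 + x + y + β * x * y) ≠ 0 := ne_of_gt hQb
  constructor
  · intro h
    rw [Fab, Prod.mk.injEq] at h
    obtain ⟨hu', hv'⟩ := h
    refine ⟨?_, ?_, ?_⟩
    · rw [div_eq_div_iff (by positivity) (by positivity), hu', hv']
      field_simp
      ring
    · rw [div_eq_div_iff (by positivity) (by positivity), hu', hv']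
      field_simp
      ring
    · rw [div_eq_div_iff (by positivity) (by positivity), hu', hv']
      field_simp
      ring
  · rintro ⟨h1, h2, h3⟩
    rw [div_eq_div_iff (by positivity) (by positivity)] at h1 h2 h3
    -- h1 : x*y*((1+u)*(1+v)) = u*v*((1+x)*(1+y))
    -- h2 : α*x*((1+u)*(1+β*v)) = β*v*((1+α*x)*(1+y))
    -- h3 : β*y*((1+α*u)*(1+v)) = α*u*((1+x)*(1+β*y))
    have hU : (1 + x + y) * (α * (1 + x + y + β * x * y) * u) =
        (1 + x + y) * (y * (β + α * x + β * y + α * β * x * y)) := by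
      linear_combination (-(α * β * y * (1 + x + y))) * h1
        - y * (1 + x + y) * h2 - (1 + y) * (1 + x + y) * h3
    have hV : (1 + x + y) * (β * (1 + x + y + α * x * y) * v) =
        (1 + x + y) * (x * (α + α * x + β * y + α * β * x * y)) := by
      linear_combination (-(α * β * x * (1 + x + y))) * h1
        - (1 + x) * (1 + x + y) * h2 - x * (1 + x + y) * h3
    have hxy0 : (1 + x + y : ℝ) ≠ 0 := by positivity
    have hU' := mul_left_cancel₀ hxy0 hU
    have hV' := mul_left_cancel₀ hxy0 hV
    rw [Fab, Prod.mk.injEq]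
    constructor
    · rw [eq_comm, div_mul_div_comm, div_eq_iff (by positivity)]
      linear_combination -hU'
    · rw [eq_comm, div_mul_div_comm, div_eq_iff (by positivity)]
      linear_combination -hV'
end

section
/- For α > 0 and x, y, u, v > 0, the pair (u,v) equals F^{(α,∞)}(x,y) if and only if xy/((1+x)(1+y)) = uv/((1+u)(1+v)), αx/((1+αx)(1+y)) = 1/(1+u), and 1/(1+x) = αu/((1+αu)(1+v)). -/
/-- The boundary map `F^{(α,∞)}`. -/
noncomputable def Finf (α : ℝ) (x y : ℝ) : ℝ × ℝ :=
  ((1 + y + α * x * y) / (α * x),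
   x * y * (1 + α * x) / (1 + x + y + α * x * y))

theorem stmt2 (α x y u v : ℝ) (hα : 0 < α)
    (hx : 0 < x) (hy : 0 < y) (hu : 0 < u) (hv : 0 < v) :
    (u, v) = Finf α x y ↔
      (x * y / ((1 + x) * (1 + y)) = u * v / ((1 + u) * (1 + v)) ∧
       α * x / ((1 + α * x) * (1 + y)) = 1 / (1 + u) ∧
       1 / (1 + x) = α * u / ((1 + α * u) * (1 + v))) := by
  have hax : (0:ℝ) < α * x := mul_pos hα hx
  have hau : (0:ℝ) < α * u := mul_pos hα hu
  have h1u : (0:ℝ) < 1 + u := by linarith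
  have h1v : (0:ℝ) < 1 + v := by linarith
  have h1x : (0:ℝ) < 1 + x := by linarith
  have h1y : (0:ℝ) < 1 + y := by linarith
  have h1ax : (0:ℝ) < 1 + α * x := by linarith
  have h1au : (0:ℝ) < 1 + α * u := by linarith
  have hD : (0:ℝ) < 1 + x + y + α * x * y := by nlinarith
  constructor
  · intro h
    rw [Prod.ext_iff] at h
    obtain ⟨h1, h2⟩ := h
    simp only [Finf] at h1 h2
    subst h1; subst h2
    refine ⟨?_, ?_, ?_⟩ <;>
      field_simp <;> ring
  · rintro ⟨h1, h2, h3⟩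
    rw [div_eq_div_iff (by positivity) h1u.ne'] at h2
    rw [div_eq_div_iff h1x.ne' (by positivity)] at h3
    rw [Prod.ext_iff]; simp only [Finf]
    constructor
    · rw [eq_div_iff hax.ne']
      nlinarith [h2]
    · rw [eq_div_iff hD.ne']
      have hu' : u * (α * x) = 1 + y + α * x * y := by nlinarith [h2]
      nlinarith [h3, hu', mul_pos hax h1v]
end

section
/- Let W be a nonnegative random variable and γ > 0. Then L_W^{(γ)}(s,θ,σ) + Δ_θ L_W^{(γ)}(s,θ,σ) + Δ_σ L_W^{(γ)}(s,θ,σ) = (γ−1) Δ_θ Δ_σ L_W^{(γ)}(s,θ,σ), where Δ_θ and Δ_σ are the forward difference operators in θ and σ respectively. -/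
open MeasureTheory

/-- Hypergeometric-type Laplace transform `L_W^{(γ)}(s,θ,σ)`. -/
noncomputable def Lap {Ω : Type*} [MeasurableSpace Ω] (μ : Measure Ω)
    (W : Ω → ℝ) (γ s θ σ : ℝ) : ℝ :=
  ∫ ω, (W ω / (1 + W ω)) ^ s * (γ * W ω / (1 + γ * W ω)) ^ θ *
    (1 / (1 + W ω)) ^ σ ∂μ

/-!
Write `a = w/(1+w)`, `b = γw/(1+γw)` and `c = 1/(1+w)`. Raising `θ` or `σ` by one multiplies the
integrand by `b` or `c`, so the identity holds pointwise as soon as `b + c - 1 = (γ-1)(1-b)(1-c)`;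
both sides equal `(γ-1)w / ((1+w)(1+γw))`. Integrating is legitimate because `b = a r` with
`r = γ(1+w)/(1+γw)` between `1` and `γ`, so for `s + θ ≥ 0`, `σ ≥ 0` the integrand is bounded by
`max 1 (γ^θ)`.
-/

namespace Lap

noncomputable def integrand (γ s θ σ w : ℝ) : ℝ :=
  (w / (1 + w)) ^ s * (γ * w / (1 + γ * w)) ^ θ * (1 / (1 + w)) ^ σ

lemma eq_integral_integrand {Ω : Type*} [MeasurableSpace Ω] (μ : Measure Ω) (W : Ω → ℝ)
    (γ s θ σ : ℝ) : Lap μ W γ s θ σ = ∫ ω, integrand γ s θ σ (W ω) ∂μ :=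
  rfl

lemma rpow_le_max_one_rpow {r γ : ℝ} (θ : ℝ) (hγ : 0 < γ) (hr : r ∈ Set.uIcc 1 γ) :
    r ^ θ ≤ max 1 (γ ^ θ) := by
  rcases le_total 0 θ with hθ | hθ <;> rcases Set.mem_uIcc.1 hr with ⟨h1, h2⟩ | ⟨h1, h2⟩
  · exact le_max_of_le_right (Real.rpow_le_rpow (by linarith) h2 hθ)
  · exact le_max_of_le_left (Real.one_rpow θ ▸ Real.rpow_le_rpow (by linarith) h2 hθ)
  · exact le_max_of_le_left (Real.one_rpow θ ▸ Real.rpow_le_rpow_of_nonpos one_pos h1 hθ)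
  · exact le_max_of_le_right (Real.rpow_le_rpow_of_nonpos hγ h1 hθ)

lemma rpow_mul_rpow_le_one {x s θ : ℝ} (hx₀ : 0 ≤ x) (hx₁ : x ≤ 1) (hsθ : 0 ≤ s + θ) :
    x ^ s * x ^ θ ≤ 1 := by
  rcases hx₀.eq_or_lt with rfl | hx
  · exact mul_le_one₀ (Real.zero_rpow_le_one s) (by positivity) (Real.zero_rpow_le_one θ)
  · rw [← Real.rpow_add hx]
    exact Real.rpow_le_one hx₀ hx₁ hsθ

lemma zero_rpow_mul_zero_rpow {s t : ℝ} (h : s + t ≠ 0) : (0 : ℝ) ^ s * (0 : ℝ) ^ t = 0 := by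
  by_cases hs : s = 0
  · rw [Real.zero_rpow (x := t) (by simpa [hs] using h), mul_zero]
  · rw [Real.zero_rpow hs, zero_mul]

lemma integrand_nonneg (γ s θ σ : ℝ) {w : ℝ} (hγ : 0 < γ) (hw : 0 ≤ w) :
    0 ≤ integrand γ s θ σ w := by
  unfold integrand
  positivity

lemma mul_one_add_div_one_add_mul_mem_uIcc {γ w : ℝ} (hγ : 0 < γ) (hw : 0 ≤ w) :
    γ * (1 + w) / (1 + γ * w) ∈ Set.uIcc 1 γ := by
  have h1γw : 0 < 1 + γ * w := by positivity
  rcases le_total γ 1 with h | h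
  · have := mul_nonneg (mul_nonneg hγ.le hw) (sub_nonneg.2 h)
    refine Set.mem_uIcc.2 (Or.inr ⟨?_, ?_⟩)
    · rw [le_div_iff₀ h1γw]; nlinarith
    · rw [div_le_one h1γw]; nlinarith
  · have := mul_nonneg (mul_nonneg hγ.le hw) (sub_nonneg.2 h)
    refine Set.mem_uIcc.2 (Or.inl ⟨?_, ?_⟩)
    · rw [le_div_iff₀ h1γw]; nlinarith
    · rw [div_le_iff₀ h1γw]; nlinarith

lemma integrand_le (s : ℝ) {γ θ σ w : ℝ} (hγ : 0 < γ) (hw : 0 ≤ w)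
    (hsθ : 0 ≤ s + θ) (hσ : 0 ≤ σ) : integrand γ s θ σ w ≤ max 1 (γ ^ θ) := by
  have h1w : 0 < 1 + w := by linarith
  have hb : γ * w / (1 + γ * w) = w / (1 + w) * (γ * (1 + w) / (1 + γ * w)) := by field_simp
  have hr := mul_one_add_div_one_add_mul_mem_uIcc hγ hw
  have hx₁ : w / (1 + w) ≤ 1 := by rw [div_le_one h1w]; linarith
  have hc : (1 / (1 + w)) ^ σ ≤ 1 :=
    Real.rpow_le_one (by positivity) (by rw [div_le_one h1w]; linarith) hσ
  calc integrand γ s θ σ w = ((w / (1 + w)) ^ s * (w / (1 + w)) ^ θ) *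
        (γ * (1 + w) / (1 + γ * w)) ^ θ * (1 / (1 + w)) ^ σ := by
        rw [integrand, hb, Real.mul_rpow (by positivity) (by positivity)]
        ring
    _ ≤ 1 * max 1 (γ ^ θ) * 1 := by
        gcongr
        · exact rpow_mul_rpow_le_one (by positivity) hx₁ hsθ
        · exact rpow_le_max_one_rpow θ hγ hr
    _ = max 1 (γ ^ θ) := by ring

lemma integrable_integrand {Ω : Type*} [MeasurableSpace Ω] {μ : Measure Ω} [IsFiniteMeasure μ]
    {W : Ω → ℝ} (hW : Measurable W) (hWnonneg : ∀ ω, 0 ≤ W ω) {γ s θ σ : ℝ} (hγ : 0 < γ)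
    (hsθ : 0 ≤ s + θ) (hσ : 0 ≤ σ) : Integrable (fun ω ↦ integrand γ s θ σ (W ω)) μ := by
  refine (integrable_const (max 1 (γ ^ θ))).mono' (by unfold integrand; fun_prop) ?_
  refine Filter.Eventually.of_forall fun ω ↦ ?_
  rw [Real.norm_of_nonneg (integrand_nonneg γ s θ σ hγ (hWnonneg ω))]
  exact integrand_le s hγ (hWnonneg ω) hsθ hσ

lemma mul_rpow_add_one_eq {x b : ℝ} (s θ : ℝ) (hx : 0 ≤ x) (hb : b = 0 ↔ x = 0)
    (hsθ : 0 ≤ s + θ) : x ^ s * b ^ (θ + 1) = x ^ s * b ^ θ * b := by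
  rcases hx.eq_or_lt with rfl | hx
  · rw [hb.2 rfl, mul_zero, zero_rpow_mul_zero_rpow (by linarith)]
  · rw [Real.rpow_add_one (mt hb.1 hx.ne'), mul_assoc]

lemma forward_difference_identity {A b c : ℝ} (θ σ γ : ℝ) (hb : A * b ^ (θ + 1) = A * b ^ θ * b)
    (hc : c ^ (σ + 1) = c ^ σ * c) (hbc : b + c - 1 = (γ - 1) * (1 - b) * (1 - c)) :
    A * b ^ (θ + 1) * c ^ σ + A * b ^ θ * c ^ (σ + 1) - A * b ^ θ * c ^ σ =
      (γ - 1) * (A * b ^ (θ + 1) * c ^ (σ + 1) - A * b ^ (θ + 1) * c ^ σ -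
        A * b ^ θ * c ^ (σ + 1) + A * b ^ θ * c ^ σ) := by
  rw [hb, hc]
  linear_combination A * b ^ θ * c ^ σ * hbc

lemma integrand_forward_difference {γ w : ℝ} (s θ σ : ℝ) (hγ : 0 < γ) (hw : 0 ≤ w)
    (hsθ : 0 ≤ s + θ) :
    integrand γ s (θ + 1) σ w + integrand γ s θ (σ + 1) w - integrand γ s θ σ w =
      (γ - 1) * (integrand γ s (θ + 1) (σ + 1) w - integrand γ s (θ + 1) σ w -
        integrand γ s θ (σ + 1) w + integrand γ s θ σ w) := by
  have h1w : 0 < 1 + w := by linarith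
  have h1γw : 0 < 1 + γ * w := by positivity
  refine forward_difference_identity θ σ γ ?_ (Real.rpow_add_one (by positivity) σ) ?_
  · refine mul_rpow_add_one_eq s θ (by positivity) ?_ hsθ
    simp [h1w.ne', h1γw.ne', hγ.ne']
  · field_simp
    ring

lemma integral_forward_difference {Ω : Type*} [MeasurableSpace Ω] {μ : Measure Ω}
    {f₀₀ f₁₀ f₀₁ f₁₁ : Ω → ℝ} (κ : ℝ) (h₀₀ : Integrable f₀₀ μ) (h₁₀ : Integrable f₁₀ μ)
    (h₀₁ : Integrable f₀₁ μ) (h₁₁ : Integrable f₁₁ μ)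
    (h : ∀ ω, f₁₀ ω + f₀₁ ω - f₀₀ ω = κ * (f₁₁ ω - f₁₀ ω - f₀₁ ω + f₀₀ ω)) :
    ∫ ω, f₁₀ ω ∂μ + ∫ ω, f₀₁ ω ∂μ - ∫ ω, f₀₀ ω ∂μ =
      κ * (∫ ω, f₁₁ ω ∂μ - ∫ ω, f₁₀ ω ∂μ - ∫ ω, f₀₁ ω ∂μ + ∫ ω, f₀₀ ω ∂μ) := by
  have := integral_congr_ae (μ := μ) (Filter.Eventually.of_forall h)
  simpa (disch := fun_prop) only [integral_add, integral_sub, integral_const_mul] using this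

end Lap

/-- `L + Δ_θ L + Δ_σ L = (γ-1) Δ_θ Δ_σ L`, where `Δ_θ, Δ_σ` are the forward
difference operators in `θ` and `σ`. -/
theorem stmt7 {Ω : Type*} [MeasurableSpace Ω] (μ : Measure Ω)
    [IsProbabilityMeasure μ] (W : Ω → ℝ) (hW : Measurable W)
    (hWpos : ∀ ω, 0 ≤ W ω) (γ : ℝ) (hγ : 0 < γ)
    (s θ σ : ℝ) (hsθ : 0 ≤ s + θ) (hσ : 0 ≤ σ) :
    Lap μ W γ s θ σ + (Lap μ W γ s (θ + 1) σ - Lap μ W γ s θ σ) +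
        (Lap μ W γ s θ (σ + 1) - Lap μ W γ s θ σ) =
      (γ - 1) * ((Lap μ W γ s (θ + 1) (σ + 1) - Lap μ W γ s (θ + 1) σ) -
        (Lap μ W γ s θ (σ + 1) - Lap μ W γ s θ σ)) := by
  have key := Lap.integral_forward_difference (μ := μ) (γ - 1)
    (Lap.integrable_integrand hW hWpos hγ hsθ hσ)
    (Lap.integrable_integrand hW hWpos hγ (by linarith) hσ)
    (Lap.integrable_integrand hW hWpos hγ hsθ (by linarith))
    (Lap.integrable_integrand hW hWpos hγ (by linarith) (by linarith))
    fun ω ↦ Lap.integrand_forward_difference s θ σ hγ (hWpos ω) hsθ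
  simp only [Lap.eq_integral_integrand]
  linear_combination key
end

section
/- Suppose X is a positive random variable with a₁, a₂, a₃, a₄ > 0 satisfying a₁ − a₃ = a₄ − a₂, and suppose that almost surely (a₄/a₁)·X/(1+X) + (a₃/a₁)·αX/(1+αX) = 1 for some α > 0. Then X satisfies the quadratic equation α a₂ X² + (α(a₂−a₄) + a₄ − a₁)X − a₁ = 0 almost surely; in particular, X is almost surely constant (Dirac). -/
open MeasureTheory

theorem quadratic_eq_zero_of_weighted_sum_eq_one {x α a₁ a₂ a₃ a₄ : ℝ} (hx : 1 + x ≠ 0)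
    (hαx : 1 + α * x ≠ 0) (ha₁ : a₁ ≠ 0) (hsum : a₁ - a₃ = a₄ - a₂)
    (h : a₄ / a₁ * (x / (1 + x)) + a₃ / a₁ * (α * x / (1 + α * x)) = 1) :
    α * a₂ * x ^ 2 + (α * (a₂ - a₄) + a₄ - a₁) * x - a₁ = 0 := by
  have hcleared :
      a₄ * x * (1 + α * x) + a₃ * (α * x) * (1 + x) = a₁ * (1 + x) * (1 + α * x) := by
    rw [div_mul_div_comm, div_mul_div_comm, div_add_div _ _ (mul_ne_zero ha₁ hx)
      (mul_ne_zero ha₁ hαx), div_eq_one_iff_eq (by positivity)] at h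
    refine mul_left_cancel₀ ha₁ ?_
    linear_combination h
  linear_combination hcleared + α * (x ^ 2 + x) * hsum

/-- If both were roots with `a (x + y) + b = 0`, Vieta would give `c = a x y > 0`. -/
theorem eq_of_quadratic_eq_zero_of_pos {a b c x y : ℝ} (ha : 0 < a) (hc : c ≤ 0)
    (hx : 0 < x) (hy : 0 < y) (hqx : a * x ^ 2 + b * x + c = 0)
    (hqy : a * y ^ 2 + b * y + c = 0) : x = y := by
  have hfactor : (x - y) * (a * (x + y) + b) = 0 := by linear_combination hqx - hqy
  rcases mul_eq_zero.mp hfactor with hxy | hsum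
  · linarith
  · nlinarith [mul_pos ha (mul_pos hx hy)]

theorem exists_ae_eq_const_of_ae_mem_subsingleton {Ω β : Type*} [MeasurableSpace Ω]
    {μ : Measure Ω} [NeZero μ] {X : Ω → β} {s : Set β} (hs : s.Subsingleton)
    (h : ∀ᵐ ω ∂μ, X ω ∈ s) : ∃ c, ∀ᵐ ω ∂μ, X ω = c := by
  obtain ⟨ω₀, hω₀⟩ := h.exists
  exact ⟨X ω₀, h.mono fun ω hω => hs hω hω₀⟩

theorem stmt12_general {Ω : Type*} [MeasurableSpace Ω] (μ : Measure Ω)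
    [IsProbabilityMeasure μ] (X : Ω → ℝ) (hXpos : ∀ᵐ ω ∂μ, 0 < X ω)
    (α a₁ a₂ a₃ a₄ : ℝ) (hα : 0 < α) (ha₁ : 0 < a₁) (ha₂ : 0 < a₂)
    (hsum : a₁ - a₃ = a₄ - a₂)
    (heq : ∀ᵐ ω ∂μ,
      a₄ / a₁ * (X ω / (1 + X ω)) + a₃ / a₁ * (α * X ω / (1 + α * X ω)) = 1) :
    (∀ᵐ ω ∂μ,
      α * a₂ * X ω ^ 2 + (α * (a₂ - a₄) + a₄ - a₁) * X ω - a₁ = 0) ∧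
    ∃ c : ℝ, ∀ᵐ ω ∂μ, X ω = c := by
  have hquad : ∀ᵐ ω ∂μ,
      α * a₂ * X ω ^ 2 + (α * (a₂ - a₄) + a₄ - a₁) * X ω - a₁ = 0 := by
    filter_upwards [hXpos, heq] with ω hx h
    exact quadratic_eq_zero_of_weighted_sum_eq_one (by positivity) (by positivity) ha₁.ne' hsum h
  refine ⟨hquad, exists_ae_eq_const_of_ae_mem_subsingleton
    (s := {x | 0 < x ∧ α * a₂ * x ^ 2 + (α * (a₂ - a₄) + a₄ - a₁) * x - a₁ = 0})
    ?_ (hXpos.and hquad)⟩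
  rintro x ⟨hx, hqx⟩ y ⟨hy, hqy⟩
  exact eq_of_quadratic_eq_zero_of_pos (b := α * (a₂ - a₄) + a₄ - a₁) (mul_pos hα ha₂)
    (neg_nonpos.mpr ha₁.le) hx hy (by linear_combination hqx) (by linear_combination hqy)

theorem stmt12 {Ω : Type*} [MeasurableSpace Ω] (μ : Measure Ω)
    [IsProbabilityMeasure μ] (X : Ω → ℝ) (hXpos : ∀ᵐ ω ∂μ, 0 < X ω)
    (α a₁ a₂ a₃ a₄ : ℝ) (hα : 0 < α) (ha₁ : 0 < a₁) (ha₂ : 0 < a₂)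
    (ha₃ : 0 < a₃) (ha₄ : 0 < a₄) (hsum : a₁ - a₃ = a₄ - a₂)
    (heq : ∀ᵐ ω ∂μ,
      a₄ / a₁ * (X ω / (1 + X ω)) + a₃ / a₁ * (α * X ω / (1 + α * X ω)) = 1) :
    (∀ᵐ ω ∂μ,
      α * a₂ * X ω ^ 2 + (α * (a₂ - a₄) + a₄ - a₁) * X ω - a₁ = 0) ∧
    ∃ c : ℝ, ∀ᵐ ω ∂μ, X ω = c :=
  stmt12_general μ X hXpos α a₁ a₂ a₃ a₄ hα ha₁ ha₂ hsum heq
end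

section
/- Let ℓ: (β₃+ℕ₀) → ℝ satisfy the hypergeometric difference equation (x+β₁+β₂+2)ℓ(x+2) − ((ρ₁+ρ₂)(x+1)+β₁ρ₂+β₂ρ₁)ℓ(x+1) + ρ₁ρ₂ x ℓ(x) = 0. Define ℓ^{(n)} recursively by ℓ^{(1)} = ℓ and ℓ^{(n)}(x) = ℓ^{(n−1)}(x+1) − ρ₂ ℓ^{(n−1)}(x). Then for each n ≥ 1, ℓ^{(n)} satisfies the same equation with β₂ replaced by β₂ + n − 1 (all other parameters unchanged). -/
/-- Iterated difference: `iter ρ₂ ℓ m = ℓ^{(m+1)}`, where `ℓ^{(1)} = ℓ` and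
`ℓ^{(n)}(x) = ℓ^{(n-1)}(x+1) - ρ₂ ℓ^{(n-1)}(x)`. -/
def iterDiff (ρ₂ : ℝ) (ℓ : ℝ → ℝ) : ℕ → ℝ → ℝ
  | 0 => ℓ
  | m + 1 => fun x => iterDiff ρ₂ ℓ m (x + 1) - ρ₂ * iterDiff ρ₂ ℓ m x

theorem stmt15 (ρ₁ ρ₂ β₁ β₂ β₃ : ℝ) (hβ₃ : 0 < β₃) (ℓ : ℝ → ℝ)
    (heq : ∀ k : ℕ, ∀ x : ℝ, x = β₃ + (k : ℝ) →
      (x + β₁ + β₂ + 2) * ℓ (x + 2) -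
        ((ρ₁ + ρ₂) * (x + 1) + β₁ * ρ₂ + β₂ * ρ₁) * ℓ (x + 1) +
        ρ₁ * ρ₂ * x * ℓ x = 0) :
    ∀ m : ℕ, ∀ k : ℕ, ∀ x : ℝ, x = β₃ + (k : ℝ) →
      (x + β₁ + (β₂ + (m : ℝ)) + 2) * iterDiff ρ₂ ℓ m (x + 2) -
        ((ρ₁ + ρ₂) * (x + 1) + β₁ * ρ₂ + (β₂ + (m : ℝ)) * ρ₁) *
          iterDiff ρ₂ ℓ m (x + 1) +
        ρ₁ * ρ₂ * x * iterDiff ρ₂ ℓ m x = 0 := by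
  intro m
  induction m with
  | zero =>
    intro k x hx
    simpa [iterDiff] using heq k x hx
  | succ m ih =>
    intro k x hx
    have h0 := ih k x hx
    have h1 := ih (k + 1) (x + 1) (by push_cast [hx]; ring)
    simp only [iterDiff] at *
    push_cast
    rw [show x + 1 + 1 = x + 2 from by ring] at h1 ⊢
    rw [show x + 1 + 2 = x + 2 + 1 from by ring] at h1
    linear_combination h1 - ρ₂ * h0
end

section
/- Let α > 0, α ≠ 1, and let U be a positive random variable. Define ℓ(x) = E[(1+U)^{−(x−β₃)}] for x ∈ β₃ + ℕ₀ (β₃ > 0 fixed), and ℓ^{(n)}(x) = ℓ^{(n−1)}(x+1) − (α/(α−1))ℓ^{(n−1)}(x), ℓ^{(1)} = ℓ. Then for all n ≥ 1 and x ∈ ℕ₀, ℓ^{(n)}(x+β₃) = (1−α)^{−(n−1)} E[ (1+αU)^{n−1}/(1+U)^{x+n−1} ]. -/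
open MeasureTheory

theorem stmt16 {Ω : Type*} [MeasurableSpace Ω] (μ : Measure Ω)
    [IsProbabilityMeasure μ] (U : Ω → ℝ) (hU : Measurable U)
    (hUpos : ∀ ω, 0 < U ω) (α β₃ : ℝ) (hα : 0 < α) (hα1 : α ≠ 1)
    (hβ₃ : 0 < β₃) (ℓ : ℝ → ℝ)
    (hℓ : ∀ x : ℝ, ℓ x = ∫ ω, (1 + U ω) ^ (-(x - β₃)) ∂μ) :
    ∀ m : ℕ, ∀ x : ℕ,
      iterDiff (α / (α - 1)) ℓ m ((x : ℝ) + β₃) =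
        (1 - α) ^ (-(m : ℤ)) *
          ∫ ω, (1 + α * U ω) ^ (m : ℝ) / (1 + U ω) ^ ((x : ℝ) + (m : ℝ)) ∂μ := by
  have hone : ∀ ω, (1:ℝ) < 1 + U ω := fun ω => by linarith [hUpos ω]
  have honeα : ∀ ω, (1:ℝ) < 1 + α * U ω := fun ω => by nlinarith [hUpos ω, hα]
  have h1α : (1 : ℝ) - α ≠ 0 := by intro h; apply hα1; linarith
  have hα1' : α - 1 ≠ 0 := by intro h; apply hα1; linarith
  -- convert rpow integrand to nat-pow integrand
  have hconv : ∀ m x : ℕ,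
      (∫ ω, (1 + α * U ω) ^ (m : ℝ) / (1 + U ω) ^ ((x : ℝ) + (m : ℝ)) ∂μ)
        = ∫ ω, (1 + α * U ω) ^ m / (1 + U ω) ^ (x + m) ∂μ := by
    intro m x
    refine integral_congr_ae (Filter.Eventually.of_forall fun ω => ?_)
    have h1 : ((x : ℝ) + (m : ℝ)) = ((x + m : ℕ) : ℝ) := by push_cast; ring
    dsimp only
    rw [h1, Real.rpow_natCast, Real.rpow_natCast]
  -- integrability
  have hint : ∀ m x : ℕ,
      Integrable (fun ω => (1 + α * U ω) ^ m / (1 + U ω) ^ (x + m)) μ := by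
    intro m x
    have hmeas : AEStronglyMeasurable
        (fun ω => (1 + α * U ω) ^ m / (1 + U ω) ^ (x + m)) μ := by
      exact (((measurable_const.add (measurable_const.mul hU)).pow_const m).div
        ((measurable_const.add hU).pow_const (x + m))).aestronglyMeasurable
    refine Integrable.mono' (integrable_const ((max 1 α) ^ m)) hmeas
      (Filter.Eventually.of_forall fun ω => ?_)
    have h1 := hone ω
    have h2 := honeα ω
    have hb : (1 + α * U ω) ^ m ≤ (max 1 α) ^ m * (1 + U ω) ^ m := by
      rw [← mul_pow]
      refine pow_le_pow_left₀ (by linarith) ?_ m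
      have hU0 := (hUpos ω).le
      rcases le_total α 1 with h | h
      · have : max 1 α = 1 := max_eq_left h
        rw [this]; nlinarith
      · have : max 1 α = α := max_eq_right h
        rw [this]; nlinarith
    have hd : (1 + U ω) ^ m ≤ (1 + U ω) ^ (x + m) :=
      pow_le_pow_right₀ h1.le (Nat.le_add_left m x)
    have hdpos : (0:ℝ) < (1 + U ω) ^ (x + m) := pow_pos (by linarith) _
    have hnn : (0:ℝ) ≤ (1 + α * U ω) ^ m / (1 + U ω) ^ (x + m) :=
      div_nonneg (pow_nonneg (by linarith) _) hdpos.le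
    rw [Real.norm_eq_abs, abs_of_nonneg hnn]
    rw [div_le_iff₀ hdpos]
    calc (1 + α * U ω) ^ m ≤ (max 1 α) ^ m * (1 + U ω) ^ m := hb
      _ ≤ (max 1 α) ^ m * (1 + U ω) ^ (x + m) := by
          have : (0:ℝ) ≤ (max 1 α) ^ m := pow_nonneg (le_max_of_le_left zero_le_one) m
          nlinarith
  intro m
  induction m with
  | zero =>
      intro x
      rw [hconv 0 x]
      simp only [iterDiff, pow_zero, Nat.add_zero]
      rw [hℓ]
      have : (-(((x:ℝ) + β₃) - β₃)) = -(x:ℝ) := by ring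
      rw [this]
      rw [show (-((0:ℕ) : ℤ)) = 0 by simp, zpow_zero, one_mul]
      refine integral_congr_ae (Filter.Eventually.of_forall fun ω => ?_)
      have h1 := hone ω
      dsimp only
      rw [Real.rpow_neg (by linarith), Real.rpow_natCast, one_div]
  | succ m ih =>
      intro x
      rw [hconv (m+1) x]
      show iterDiff (α / (α - 1)) ℓ m ((x : ℝ) + β₃ + 1) -
          (α / (α - 1)) * iterDiff (α / (α - 1)) ℓ m ((x : ℝ) + β₃) = _
      have hx1 : ((x : ℝ) + β₃ + 1) = (((x + 1 : ℕ)) : ℝ) + β₃ := by push_cast; ring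
      rw [hx1, ih (x+1), ih x, hconv m (x+1), hconv m x]
      have key : (∫ ω, (1 + α * U ω) ^ m / (1 + U ω) ^ (x + 1 + m) ∂μ) -
          (α / (α - 1)) * ∫ ω, (1 + α * U ω) ^ m / (1 + U ω) ^ (x + m) ∂μ
          = (1 - α)⁻¹ * ∫ ω, (1 + α * U ω) ^ (m+1) / (1 + U ω) ^ (x + (m+1)) ∂μ := by
        rw [← integral_const_mul, ← integral_const_mul, ← integral_sub (hint m (x+1))
          ((hint m x).const_mul _)]
        refine integral_congr_ae (Filter.Eventually.of_forall fun ω => ?_)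
        have h1 := hone ω
        have hne : (1 + U ω) ≠ 0 := by linarith
        have e1 : x + 1 + m = (x + m) + 1 := by ring
        have e2 : x + (m + 1) = (x + m) + 1 := by ring
        simp only [e1, e2, pow_succ]
        field_simp
        ring
      have fact : (1 - α) ^ (-(m:ℤ)) * (∫ ω, (1 + α * U ω) ^ m / (1 + U ω) ^ (x + 1 + m) ∂μ) -
          (α / (α - 1)) * ((1 - α) ^ (-(m:ℤ)) * ∫ ω, (1 + α * U ω) ^ m / (1 + U ω) ^ (x + m) ∂μ)
          = (1 - α) ^ (-(m:ℤ)) * ((∫ ω, (1 + α * U ω) ^ m / (1 + U ω) ^ (x + 1 + m) ∂μ) -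
            (α / (α - 1)) * ∫ ω, (1 + α * U ω) ^ m / (1 + U ω) ^ (x + m) ∂μ) := by ring
      rw [fact, key, ← mul_assoc]
      congr 1
      rw [show (-(((m:ℕ)+1 : ℕ) : ℤ)) = (-(m:ℤ)) + (-1) by push_cast; ring,
        zpow_add₀ h1α, zpow_neg_one]
end

section
/- Fix ρ₁ > 0 > ρ₂ and β₁, β₂ > −1, β₃ > 0. Define ℓ₁(x) = ∫₀^{ρ₁} t^{x−1}(ρ₁−t)^{β₁}(t−ρ₂)^{β₂} dt and ℓ₂(x) = (−1)^{x−β₃} ∫_{ρ₂}^{0} (−t)^{x−1}(ρ₁−t)^{β₁}(t−ρ₂)^{β₂} dt for x ∈ β₃ + ℕ₀. Then the vectors (ℓ₁(β₃), ℓ₁(β₃+1)) and (ℓ₂(β₃), ℓ₂(β₃+1)) in ℝ² are linearly independent; consequently any solution of the hypergeometric difference equation on β₃+ℕ₀ with these parameters is a real linear combination δ₁ℓ₁ + δ₂ℓ₂. -/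
/-!
Write `J(ρ, σ, β, γ; x) = ∫₀^ρ t^(x-1) (ρ - t)^β (t - σ)^γ dt` for `σ < 0 < ρ`. Then
`ℓ₁(β₃ + k) = J(ρ₁, ρ₂, β₁, β₂; β₃ + k)` and, after `t ↦ -t`,
`ℓ₂(β₃ + k) = (-1)^k J(-ρ₂, -ρ₁, β₂, β₁; β₃ + k)`. Differentiating
`t^x (ρ - t)^(β+1) (t - σ)^(γ+1)`, which vanishes at both endpoints, gives the three-term
recurrence for `J`; the change of parameters flips the sign of the middle coefficient, and the
factor `(-1)^k` flips it back. As `J > 0`, we get `ℓ₁(β₃), ℓ₁(β₃+1), ℓ₂(β₃) > 0 > ℓ₂(β₃+1)`, so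
the determinant of the initial values is nonzero. The leading coefficient of the recurrence never
vanishes, so a solution is determined by its first two values and is therefore a combination of
`ℓ₁` and `ℓ₂`.
-/

open MeasureTheory Set intervalIntegral

section Recurrence

variable {K : Type*} [Field K] {a b c : ℕ → K}

theorem eq_zero_of_recurrence (ha : ∀ k, a k ≠ 0) {u : ℕ → K}
    (hu : ∀ k, a k * u (k + 2) + b k * u (k + 1) + c k * u k = 0) (h₀ : u 0 = 0) (h₁ : u 1 = 0)
    (k : ℕ) : u k = 0 := by
  suffices ∀ k, u k = 0 ∧ u (k + 1) = 0 from (this k).1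
  intro k
  induction k with
  | zero => exact ⟨h₀, h₁⟩
  | succ k ih => exact ⟨ih.2, by simpa [ih.1, ih.2, ha k] using hu k⟩

theorem exists_eq_linear_combination_of_recurrence (ha : ∀ k, a k ≠ 0) {u v w : ℕ → K}
    (hu : ∀ k, a k * u (k + 2) + b k * u (k + 1) + c k * u k = 0)
    (hv : ∀ k, a k * v (k + 2) + b k * v (k + 1) + c k * v k = 0)
    (hw : ∀ k, a k * w (k + 2) + b k * w (k + 1) + c k * w k = 0)
    (hdet : u 0 * v 1 - u 1 * v 0 ≠ 0) :
    ∃ δ₁ δ₂ : K, ∀ k, w k = δ₁ * u k + δ₂ * v k := by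
  set δ₁ := (w 0 * v 1 - w 1 * v 0) / (u 0 * v 1 - u 1 * v 0)
  set δ₂ := (u 0 * w 1 - u 1 * w 0) / (u 0 * v 1 - u 1 * v 0)
  have hrec : ∀ k, a k * (w (k + 2) - (δ₁ * u (k + 2) + δ₂ * v (k + 2))) +
      b k * (w (k + 1) - (δ₁ * u (k + 1) + δ₂ * v (k + 1))) +
      c k * (w k - (δ₁ * u k + δ₂ * v k)) = 0 := fun k => by
    linear_combination hw k - δ₁ * hu k - δ₂ * hv k
  have h₀ : w 0 - (δ₁ * u 0 + δ₂ * v 0) = 0 := by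
    rw [div_mul_eq_mul_div, div_mul_eq_mul_div, ← add_div, sub_eq_zero, eq_div_iff hdet]
    ring
  have h₁ : w 1 - (δ₁ * u 1 + δ₂ * v 1) = 0 := by
    rw [div_mul_eq_mul_div, div_mul_eq_mul_div, ← add_div, sub_eq_zero, eq_div_iff hdet]
    ring
  exact ⟨δ₁, δ₂, fun k => sub_eq_zero.mp <|
    eq_zero_of_recurrence ha (u := fun k => w k - (δ₁ * u k + δ₂ * v k)) hrec h₀ h₁ k⟩

end Recurrence

theorem linearIndependent_pair_of_det_ne_zero {K : Type*} [Field K] {p q r s : K}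
    (h : p * s - q * r ≠ 0) : LinearIndependent K ![(p, q), (r, s)] := by
  refine LinearIndependent.pair_iff.mpr fun x y hxy => ?_
  simp only [Prod.smul_mk, Prod.mk_add_mk, smul_eq_mul, Prod.mk_eq_zero] at hxy
  obtain ⟨h₁, h₂⟩ := hxy
  have hx : x * (p * s - q * r) = 0 := by linear_combination s * h₁ - r * h₂
  have hy : y * (p * s - q * r) = 0 := by linear_combination p * h₂ - q * h₁
  exact ⟨(mul_eq_zero.mp hx).resolve_right h, (mul_eq_zero.mp hy).resolve_right h⟩

theorem intervalIntegrable_rpow_mul_rpow_mul {b p q : ℝ} {g : ℝ → ℝ} (hb : 0 < b)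
    (hp : -1 < p) (hq : -1 < q) (hg : ContinuousOn g (Icc 0 b)) :
    IntervalIntegrable (fun t => t ^ p * (b - t) ^ q * g t) volume 0 b := by
  have hb₂ : b / 2 < b := half_lt_self hb
  refine IntervalIntegrable.trans (b := b / 2) ?_ ?_
  · have hcont : ContinuousOn (fun t => (b - t) ^ q * g t) (uIcc 0 (b / 2)) := by
      rw [uIcc_of_le (by positivity)]
      exact (ContinuousOn.rpow_const (f := fun t => b - t) (by fun_prop) fun t ht =>
        Or.inl (sub_pos.2 (by linarith [ht.2])).ne').mul
        (hg.mono (Icc_subset_Icc_right hb₂.le))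
    simpa only [mul_assoc] using (intervalIntegrable_rpow' hp).mul_continuousOn hcont
  · have hsing : IntervalIntegrable (fun t => (b - t) ^ q) volume (b / 2) b := by
      simpa [sub_half] using
        ((intervalIntegrable_rpow' (a := 0) (b := b / 2) hq).comp_sub_left b).symm
    have hcont : ContinuousOn (fun t => t ^ p * g t) (uIcc (b / 2) b) := by
      rw [uIcc_of_le hb₂.le]
      exact (continuousOn_id.rpow_const fun t ht =>
        Or.inl (by linarith [ht.1] : (0 : ℝ) < t).ne').mul
        (hg.mono (Icc_subset_Icc_left (by positivity)))
    convert hsing.mul_continuousOn hcont using 1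
    funext t
    ring

theorem setIntegral_comp_neg_Ioo {E : Type*} [NormedAddCommGroup E] [NormedSpace ℝ E]
    (a b : ℝ) (f : ℝ → E) : ∫ x in Ioo a b, f (-x) = ∫ x in Ioo (-b) (-a), f x := by
  have hneg : MeasurableEmbedding fun x : ℝ => -x :=
    (Homeomorph.neg ℝ).isClosedEmbedding.measurableEmbedding
  have := hneg.setIntegral_map (μ := volume) f (Ioo (-b) (-a))
  rw [Measure.map_neg_eq_self (volume : Measure ℝ)] at this
  simp_rw [this, neg_preimage, neg_Ioo, neg_neg]

def SolvesHypergeomRecurrence (ρ₁ ρ₂ β₁ β₂ x : ℝ) (u : ℕ → ℝ) : Prop :=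
  ∀ k : ℕ, (x + k + β₁ + β₂ + 2) * u (k + 2) -
    ((ρ₁ + ρ₂) * (x + k + 1) + β₁ * ρ₂ + β₂ * ρ₁) * u (k + 1) + ρ₁ * ρ₂ * (x + k) * u k = 0

namespace SolvesHypergeomRecurrence

variable {ρ₁ ρ₂ β₁ β₂ x : ℝ}

theorem neg_one_pow_mul {u : ℕ → ℝ} (hu : SolvesHypergeomRecurrence (-ρ₂) (-ρ₁) β₂ β₁ x u) :
    SolvesHypergeomRecurrence ρ₁ ρ₂ β₁ β₂ x fun k => (-1) ^ k * u k := fun k => by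
  linear_combination (-1) ^ k * hu k

theorem exists_eq_linear_combination (hx : 0 < x) (hβ₁ : -1 < β₁) (hβ₂ : -1 < β₂)
    {u v w : ℕ → ℝ} (hu : SolvesHypergeomRecurrence ρ₁ ρ₂ β₁ β₂ x u)
    (hv : SolvesHypergeomRecurrence ρ₁ ρ₂ β₁ β₂ x v)
    (hw : SolvesHypergeomRecurrence ρ₁ ρ₂ β₁ β₂ x w) (hdet : u 0 * v 1 - u 1 * v 0 ≠ 0) :
    ∃ δ₁ δ₂ : ℝ, ∀ k, w k = δ₁ * u k + δ₂ * v k :=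
  exists_eq_linear_combination_of_recurrence (a := fun k => x + k + β₁ + β₂ + 2)
    (b := fun k => -((ρ₁ + ρ₂) * (x + k + 1) + β₁ * ρ₂ + β₂ * ρ₁))
    (c := fun k => ρ₁ * ρ₂ * (x + k))
    (fun k => (by linarith [k.cast_nonneg (α := ℝ)] : 0 < x + k + β₁ + β₂ + 2).ne')
    (fun k => by linear_combination hu k) (fun k => by linear_combination hv k)
    (fun k => by linear_combination hw k) hdet

end SolvesHypergeomRecurrence

noncomputable def eulerIntegrand (ρ₁ ρ₂ β₁ β₂ x t : ℝ) : ℝ :=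
  t ^ (x - 1) * (ρ₁ - t) ^ β₁ * (t - ρ₂) ^ β₂

noncomputable def eulerIntegral (ρ₁ ρ₂ β₁ β₂ x : ℝ) : ℝ :=
  ∫ t in Ioo 0 ρ₁, eulerIntegrand ρ₁ ρ₂ β₁ β₂ x t

section EulerIntegral

variable {ρ₁ ρ₂ β₁ β₂ x : ℝ}

theorem intervalIntegrable_eulerIntegrand (hρ₁ : 0 < ρ₁) (hρ₂ : ρ₂ < 0) (hβ₁ : -1 < β₁)
    (hx : 0 < x) : IntervalIntegrable (eulerIntegrand ρ₁ ρ₂ β₁ β₂ x) volume 0 ρ₁ :=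
  intervalIntegrable_rpow_mul_rpow_mul hρ₁ (by linarith) hβ₁
    (ContinuousOn.rpow_const (f := fun t => t - ρ₂) (by fun_prop) fun t ht =>
      Or.inl (sub_pos.2 (by linarith [ht.1])).ne')

theorem eulerIntegral_pos (hρ₁ : 0 < ρ₁) (hρ₂ : ρ₂ < 0) (hβ₁ : -1 < β₁) (hx : 0 < x) :
    0 < eulerIntegral ρ₁ ρ₂ β₁ β₂ x := by
  rw [eulerIntegral, ← integral_Ioc_eq_integral_Ioo, ← integral_of_le hρ₁.le]
  refine intervalIntegral_pos_of_pos_on (intervalIntegrable_eulerIntegrand hρ₁ hρ₂ hβ₁ hx)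
    (fun t ⟨ht₀, htρ₁⟩ => ?_) hρ₁
  have : 0 < ρ₁ - t := by linarith
  have : 0 < t - ρ₂ := by linarith
  unfold eulerIntegrand
  positivity

theorem integral_Ioo_neg_eq_eulerIntegral :
    ∫ t in Ioo ρ₂ 0, (-t) ^ (x - 1) * (ρ₁ - t) ^ β₁ * (t - ρ₂) ^ β₂ =
      eulerIntegral (-ρ₂) (-ρ₁) β₂ β₁ x := by
  rw [eulerIntegral, ← neg_zero, ← setIntegral_comp_neg_Ioo, neg_zero]
  congr 1
  funext t
  rw [eulerIntegrand, show -ρ₂ - -t = t - ρ₂ by ring, show -t - -ρ₁ = ρ₁ - t by ring]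
  ring

theorem hasDerivAt_rpow_mul_rpow_mul_rpow {t : ℝ} (ht₀ : 0 < t) (ht₁ : t < ρ₁) (ht₂ : ρ₂ < t) :
    HasDerivAt (fun t => t ^ x * (ρ₁ - t) ^ (β₁ + 1) * (t - ρ₂) ^ (β₂ + 1))
      (-(x + β₁ + β₂ + 2) * eulerIntegrand ρ₁ ρ₂ β₁ β₂ (x + 2) t +
        ((ρ₁ + ρ₂) * (x + 1) + β₁ * ρ₂ + β₂ * ρ₁) * eulerIntegrand ρ₁ ρ₂ β₁ β₂ (x + 1) t -
        ρ₁ * ρ₂ * x * eulerIntegrand ρ₁ ρ₂ β₁ β₂ x t) t := by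
  have h₁ : 0 < ρ₁ - t := by linarith
  have h₂ : 0 < t - ρ₂ := by linarith
  have hd := ((Real.hasDerivAt_rpow_const (p := x) (Or.inl ht₀.ne')).mul
    (((hasDerivAt_id t).const_sub ρ₁).rpow_const (p := β₁ + 1) (Or.inl h₁.ne'))).mul
    (((hasDerivAt_id t).sub_const ρ₂).rpow_const (p := β₂ + 1) (Or.inl h₂.ne'))
  refine hd.congr_deriv ?_
  simp only [eulerIntegrand, id, Pi.mul_apply, add_sub_cancel_right, Real.rpow_add_one h₁.ne',
    Real.rpow_add_one h₂.ne']
  rw [show x + 2 - 1 = x + 1 by ring, Real.rpow_add_one ht₀.ne', Real.rpow_sub_one ht₀.ne']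
  field_simp
  ring

theorem eulerIntegral_recurrence (hρ₁ : 0 < ρ₁) (hρ₂ : ρ₂ < 0) (hβ₁ : -1 < β₁) (hx : 0 < x) :
    (x + β₁ + β₂ + 2) * eulerIntegral ρ₁ ρ₂ β₁ β₂ (x + 2) -
      ((ρ₁ + ρ₂) * (x + 1) + β₁ * ρ₂ + β₂ * ρ₁) * eulerIntegral ρ₁ ρ₂ β₁ β₂ (x + 1) +
      ρ₁ * ρ₂ * x * eulerIntegral ρ₁ ρ₂ β₁ β₂ x = 0 := by
  have hint : ∀ y, 0 < y → IntervalIntegrable (eulerIntegrand ρ₁ ρ₂ β₁ β₂ y) volume 0 ρ₁ :=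
    fun y hy => intervalIntegrable_eulerIntegrand hρ₁ hρ₂ hβ₁ hy
  have hcont : ContinuousOn (fun t => t ^ x * (ρ₁ - t) ^ (β₁ + 1) * (t - ρ₂) ^ (β₂ + 1))
      (Icc 0 ρ₁) :=
    ((continuousOn_id.rpow_const fun _ _ => Or.inr hx.le).mul
      (ContinuousOn.rpow_const (f := fun t => ρ₁ - t) (by fun_prop) fun _ _ =>
        Or.inr (by linarith))).mul
      (ContinuousOn.rpow_const (f := fun t => t - ρ₂) (by fun_prop) fun t ht =>
        Or.inl (sub_pos.2 (by linarith [ht.1])).ne')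
  have h₂ := (hint (x + 2) (by linarith)).const_mul (-(x + β₁ + β₂ + 2))
  have h₁ := (hint (x + 1) (by linarith)).const_mul ((ρ₁ + ρ₂) * (x + 1) + β₁ * ρ₂ + β₂ * ρ₁)
  have h₀ := (hint x hx).const_mul (ρ₁ * ρ₂ * x)
  have hFTC := integral_eq_sub_of_hasDerivAt_of_le hρ₁.le hcont
    (fun t ht => hasDerivAt_rpow_mul_rpow_mul_rpow ht.1 ht.2 (by linarith [ht.1]))
    ((h₂.add h₁).sub h₀)
  rw [intervalIntegral.integral_sub (h₂.add h₁) h₀, intervalIntegral.integral_add h₂ h₁,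
    intervalIntegral.integral_const_mul, intervalIntegral.integral_const_mul,
    intervalIntegral.integral_const_mul, sub_self, Real.zero_rpow hx.ne',
    Real.zero_rpow (by linarith)] at hFTC
  simp only [eulerIntegral, ← integral_Ioc_eq_integral_Ioo, ← integral_of_le hρ₁.le]
  linear_combination -hFTC

theorem solvesHypergeomRecurrence_eulerIntegral (hρ₁ : 0 < ρ₁) (hρ₂ : ρ₂ < 0) (hβ₁ : -1 < β₁)
    (hx : 0 < x) :
    SolvesHypergeomRecurrence ρ₁ ρ₂ β₁ β₂ x fun k => eulerIntegral ρ₁ ρ₂ β₁ β₂ (x + k) :=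
  fun k => by
    push_cast
    simpa only [← add_assoc] using
      eulerIntegral_recurrence hρ₁ hρ₂ hβ₁ (β₂ := β₂) (x := x + k) (by positivity)

end EulerIntegral

theorem stmt17 (ρ₁ ρ₂ β₁ β₂ β₃ : ℝ) (hρ₁ : 0 < ρ₁) (hρ₂ : ρ₂ < 0)
    (hβ₁ : -1 < β₁) (hβ₂ : -1 < β₂) (hβ₃ : 0 < β₃)
    (ℓ₁ ℓ₂ : ℕ → ℝ)
    (hℓ₁ : ∀ k : ℕ, ℓ₁ k =
      ∫ t in Set.Ioo (0 : ℝ) ρ₁,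
        t ^ (β₃ + (k : ℝ) - 1) * (ρ₁ - t) ^ β₁ * (t - ρ₂) ^ β₂)
    (hℓ₂ : ∀ k : ℕ, ℓ₂ k = (-1 : ℝ) ^ k *
      ∫ t in Set.Ioo ρ₂ (0 : ℝ),
        (-t) ^ (β₃ + (k : ℝ) - 1) * (ρ₁ - t) ^ β₁ * (t - ρ₂) ^ β₂) :
    LinearIndependent ℝ ![(ℓ₁ 0, ℓ₁ 1), (ℓ₂ 0, ℓ₂ 1)] ∧
    ∀ ℓ : ℕ → ℝ,
      (∀ k : ℕ, (β₃ + (k : ℝ) + β₁ + β₂ + 2) * ℓ (k + 2) -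
          ((ρ₁ + ρ₂) * (β₃ + (k : ℝ) + 1) + β₁ * ρ₂ + β₂ * ρ₁) * ℓ (k + 1) +
          ρ₁ * ρ₂ * (β₃ + (k : ℝ)) * ℓ k = 0) →
      ∃ δ₁ δ₂ : ℝ, ∀ k : ℕ, ℓ k = δ₁ * ℓ₁ k + δ₂ * ℓ₂ k := by
  have hℓ₁_eq : ℓ₁ = fun k : ℕ => eulerIntegral ρ₁ ρ₂ β₁ β₂ (β₃ + k) := funext hℓ₁
  have hℓ₂_eq : ℓ₂ = fun k : ℕ => (-1) ^ k * eulerIntegral (-ρ₂) (-ρ₁) β₂ β₁ (β₃ + k) :=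
    funext fun k => by rw [hℓ₂, integral_Ioo_neg_eq_eulerIntegral]
  have hsol₁ : SolvesHypergeomRecurrence ρ₁ ρ₂ β₁ β₂ β₃ ℓ₁ := by
    rw [hℓ₁_eq]
    exact solvesHypergeomRecurrence_eulerIntegral hρ₁ hρ₂ hβ₁ hβ₃
  have hsol₂ : SolvesHypergeomRecurrence ρ₁ ρ₂ β₁ β₂ β₃ ℓ₂ := by
    rw [hℓ₂_eq]
    exact (solvesHypergeomRecurrence_eulerIntegral (by linarith) (by linarith) hβ₂
      hβ₃).neg_one_pow_mul
  have hdet : ℓ₁ 0 * ℓ₂ 1 - ℓ₁ 1 * ℓ₂ 0 ≠ 0 := by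
    have hJ (k : ℕ) := eulerIntegral_pos (β₂ := β₂) hρ₁ hρ₂ hβ₁ (x := β₃ + k) (by positivity)
    have hI (k : ℕ) := eulerIntegral_pos (ρ₁ := -ρ₂) (ρ₂ := -ρ₁) (β₂ := β₁) (by linarith)
      (by linarith) hβ₂ (x := β₃ + k) (by positivity)
    simp only [hℓ₁_eq, hℓ₂_eq, pow_zero, pow_one, one_mul, neg_one_mul]
    nlinarith [mul_pos (hJ 0) (hI 1), mul_pos (hJ 1) (hI 0)]
  exact ⟨linearIndependent_pair_of_det_ne_zero hdet, fun ℓ hℓ =>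
    hsol₁.exists_eq_linear_combination hβ₃ hβ₁ hβ₂ hsol₂ hℓ hdet⟩
end

section
/- Let A, B, C be bounded positive random variables and c₁, c₂ ∈ ℝ with c₁ + c₂ = 1. Suppose E[A^x] = c₁E[B^x] + c₂E[C^x] for all even x ∈ ℕ₀ and E[A^{y+1}] = c₁E[B^{y+1}] − c₂E[C^{y+1}] for all even y ∈ ℕ₀. If the law of C differs from the law of B, then c₂ = 0 and A, B have the same distribution. -/
open MeasureTheory
open scoped ENNReal NNReal

lemma int_comp {Ω : Type*} [MeasurableSpace Ω] (μ : Measure Ω) [IsProbabilityMeasure μ]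
    {D : Ω → ℝ} (hD : Measurable D) {M : ℝ} (hr : ∀ ω, D ω ∈ Set.Icc (-M) M)
    {g : ℝ → ℝ} (hg : Continuous g) : Integrable (fun ω => g (D ω)) μ := by
  obtain ⟨K, hK⟩ := (isCompact_Icc (a := -M) (b := M)).exists_bound_of_continuousOn hg.continuousOn
  exact (integrable_const K).mono' ((hg.measurable.comp hD).aestronglyMeasurable)
    (Filter.Eventually.of_forall fun ω => hK _ (hr ω))

-- if all monomial integrals match, all polynomial integrals match
lemma poly_eq {Ω : Type*} [MeasurableSpace Ω] (μ : Measure Ω) [IsProbabilityMeasure μ]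
    {D : Ω → ℝ} (hD : Measurable D) {M : ℝ} (hr : ∀ ω, D ω ∈ Set.Icc (-M) M)
    (p : Polynomial ℝ) :
    ∫ ω, p.eval (D ω) ∂μ =
      ∑ i ∈ Finset.range (p.natDegree + 1), p.coeff i * ∫ ω, D ω ^ i ∂μ := by
  have h1 : ∀ ω, p.eval (D ω) =
      ∑ i ∈ Finset.range (p.natDegree + 1), p.coeff i * D ω ^ i := by
    intro ω; rw [Polynomial.eval_eq_sum_range]
  simp_rw [h1]
  rw [integral_finset_sum]
  · refine Finset.sum_congr rfl fun i _ => ?_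
    rw [integral_const_mul]
  · intro i _
    exact (int_comp μ hD hr (continuous_pow i)).const_mul _

lemma key_approx {Ω : Type*} [MeasurableSpace Ω] (μ : Measure Ω) [IsProbabilityMeasure μ]
    {D₁ D₂ D₃ : Ω → ℝ} (h1 : Measurable D₁) (h2 : Measurable D₂) (h3 : Measurable D₃)
    {M : ℝ} (hr1 : ∀ ω, D₁ ω ∈ Set.Icc (-M) M) (hr2 : ∀ ω, D₂ ω ∈ Set.Icc (-M) M)
    (hr3 : ∀ ω, D₃ ω ∈ Set.Icc (-M) M) (c₁ c₂ : ℝ)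
    (hmon : ∀ n : ℕ, ∫ ω, D₁ ω ^ n ∂μ = c₁ * ∫ ω, D₂ ω ^ n ∂μ + c₂ * ∫ ω, D₃ ω ^ n ∂μ)
    {g : ℝ → ℝ} (hg : Continuous g) :
    ∫ ω, g (D₁ ω) ∂μ = c₁ * ∫ ω, g (D₂ ω) ∂μ + c₂ * ∫ ω, g (D₃ ω) ∂μ := by
  set x := (∫ ω, g (D₁ ω) ∂μ) - (c₁ * ∫ ω, g (D₂ ω) ∂μ + c₂ * ∫ ω, g (D₃ ω) ∂μ) with hx
  have hpoly : ∀ p : Polynomial ℝ, ∫ ω, p.eval (D₁ ω) ∂μ =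
      c₁ * ∫ ω, p.eval (D₂ ω) ∂μ + c₂ * ∫ ω, p.eval (D₃ ω) ∂μ := by
    intro p
    rw [poly_eq μ h1 hr1, poly_eq μ h2 hr2, poly_eq μ h3 hr3, Finset.mul_sum, Finset.mul_sum,
      ← Finset.sum_add_distrib]
    refine Finset.sum_congr rfl fun i _ => ?_
    rw [hmon i]; ring
  have hdiff : ∀ (D : Ω → ℝ), Measurable D → (∀ ω, D ω ∈ Set.Icc (-M) M) →
      ∀ (p : Polynomial ℝ) (ε : ℝ), (∀ y ∈ Set.Icc (-M) M, |p.eval y - g y| < ε) →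
      |(∫ ω, g (D ω) ∂μ) - ∫ ω, p.eval (D ω) ∂μ| ≤ ε := by
    intro D hD hr p ε hp
    have hig : Integrable (fun ω => g (D ω)) μ := int_comp μ hD hr hg
    have hip : Integrable (fun ω => p.eval (D ω)) μ := int_comp μ hD hr p.continuous_aeval
    rw [← integral_sub hig hip, ← Real.norm_eq_abs]
    have hb : ∀ᵐ ω ∂μ, ‖g (D ω) - p.eval (D ω)‖ ≤ ε := by
      refine Filter.Eventually.of_forall fun ω => ?_
      rw [Real.norm_eq_abs, abs_sub_comm]
      exact (hp _ (hr ω)).le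
    have := MeasureTheory.norm_integral_le_of_norm_le_const (μ := μ)
      (f := fun ω => g (D ω) - p.eval (D ω)) (C := ε) hb
    simpa [measure_univ] using this
  have habs : ∀ ε > (0:ℝ), |x| ≤ (1 + |c₁| + |c₂|) * ε := by
    intro ε hε
    obtain ⟨p, hp⟩ := exists_polynomial_near_of_continuousOn (-M) M g hg.continuousOn ε hε
    have e1 := hdiff D₁ h1 hr1 p ε hp
    have e2 := hdiff D₂ h2 hr2 p ε hp
    have e3 := hdiff D₃ h3 hr3 p ε hp
    set t1 := (∫ ω, g (D₁ ω) ∂μ) - ∫ ω, p.eval (D₁ ω) ∂μ with ht1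
    set t2 := (∫ ω, g (D₂ ω) ∂μ) - ∫ ω, p.eval (D₂ ω) ∂μ with ht2
    set t3 := (∫ ω, g (D₃ ω) ∂μ) - ∫ ω, p.eval (D₃ ω) ∂μ with ht3
    have hxeq : x = t1 - c₁ * t2 - c₂ * t3 := by
      rw [hx, ht1, ht2, ht3, hpoly p]; ring
    have a1 : |t1 - c₁ * t2 - c₂ * t3| ≤ |t1 - c₁ * t2| + |c₂ * t3| := abs_sub _ _
    have a2 : |t1 - c₁ * t2| ≤ |t1| + |c₁ * t2| := abs_sub _ _
    have b2 : |c₁ * t2| ≤ |c₁| * ε := by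
      rw [abs_mul]; exact mul_le_mul_of_nonneg_left e2 (abs_nonneg _)
    have b3 : |c₂ * t3| ≤ |c₂| * ε := by
      rw [abs_mul]; exact mul_le_mul_of_nonneg_left e3 (abs_nonneg _)
    rw [hxeq]
    nlinarith [e1, a1, a2, b2, b3]
  have hx0 : x = 0 := by
    by_contra h
    have hpos : 0 < |x| := abs_pos.mpr h
    have hK : (0:ℝ) < 1 + |c₁| + |c₂| := by positivity
    have h1 := habs (|x| / (2 * (1 + |c₁| + |c₂|))) (by positivity)
    have h2 : (1 + |c₁| + |c₂|) * (|x| / (2 * (1 + |c₁| + |c₂|))) = |x| / 2 := by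
      field_simp
    rw [h2] at h1
    linarith
  exact sub_eq_zero.mp (hx.symm.trans hx0)

theorem stmt18 {Ω : Type*} [MeasurableSpace Ω] (μ : Measure Ω)
    [IsProbabilityMeasure μ] (A B C : Ω → ℝ)
    (hA : Measurable A) (hB : Measurable B) (hC : Measurable C)
    (M : ℝ) (hM : 0 < M)
    (hAbd : ∀ ω, 0 < A ω ∧ A ω ≤ M) (hBbd : ∀ ω, 0 < B ω ∧ B ω ≤ M)
    (hCbd : ∀ ω, 0 < C ω ∧ C ω ≤ M)
    (c₁ c₂ : ℝ) (hc : c₁ + c₂ = 1)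
    (heven : ∀ k : ℕ, ∫ ω, A ω ^ (2 * k) ∂μ =
      c₁ * ∫ ω, B ω ^ (2 * k) ∂μ + c₂ * ∫ ω, C ω ^ (2 * k) ∂μ)
    (hodd : ∀ k : ℕ, ∫ ω, A ω ^ (2 * k + 1) ∂μ =
      c₁ * ∫ ω, B ω ^ (2 * k + 1) ∂μ - c₂ * ∫ ω, C ω ^ (2 * k + 1) ∂μ)
    (hBC : Measure.map C μ ≠ Measure.map B μ) :
    c₂ = 0 ∧ Measure.map A μ = Measure.map B μ := by
  have hrA : ∀ ω, A ω ∈ Set.Icc (-M) M := fun ω =>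
    ⟨le_of_lt (lt_trans (neg_neg_of_pos hM) (hAbd ω).1), (hAbd ω).2⟩
  have hrB : ∀ ω, B ω ∈ Set.Icc (-M) M := fun ω =>
    ⟨le_of_lt (lt_trans (neg_neg_of_pos hM) (hBbd ω).1), (hBbd ω).2⟩
  have hrC : ∀ ω, -(C ω) ∈ Set.Icc (-M) M := fun ω =>
    ⟨neg_le_neg (hCbd ω).2, le_of_lt (lt_trans (neg_neg_of_pos (hCbd ω).1) hM)⟩
  have hmC : Measurable (fun ω => -(C ω)) := hC.neg
  -- monomial identity with -C
  have hmon : ∀ n : ℕ, ∫ ω, A ω ^ n ∂μ =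
      c₁ * ∫ ω, B ω ^ n ∂μ + c₂ * ∫ ω, (-(C ω)) ^ n ∂μ := by
    intro n
    rcases Nat.even_or_odd n with ⟨k, hk⟩ | ⟨k, hk⟩
    · have hn : n = 2 * k := by omega
      subst hn
      have : ∀ ω, (-(C ω)) ^ (2 * k) = C ω ^ (2 * k) := fun ω =>
        (even_two_mul k).neg_pow _
      simp_rw [this]
      exact heven k
    · have hn : n = 2 * k + 1 := by omega
      subst hn
      have : ∀ ω, (-(C ω)) ^ (2 * k + 1) = -(C ω ^ (2 * k + 1)) := fun ω =>
        (odd_two_mul_add_one k).neg_pow _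
      simp_rw [this, integral_neg, mul_neg, ← sub_eq_add_neg]
      exact hodd k
  have key : ∀ {g : ℝ → ℝ}, Continuous g →
      ∫ ω, g (A ω) ∂μ = c₁ * ∫ ω, g (B ω) ∂μ + c₂ * ∫ ω, g (-(C ω)) ∂μ :=
    fun hg => key_approx μ hA hB hmC hrA hrB hrC c₁ c₂ hmon hg
  -- compute with g = max (-x) 0 to get c₂ = 0
  have hc₂ : c₂ = 0 := by
    have hg : Continuous (fun x : ℝ => max (-x) 0) := by continuity
    have h := key hg
    have eA : ∀ ω, max (-(A ω)) 0 = 0 := fun ω =>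
      max_eq_right (neg_nonpos.mpr (hAbd ω).1.le)
    have eB : ∀ ω, max (-(B ω)) 0 = 0 := fun ω =>
      max_eq_right (neg_nonpos.mpr (hBbd ω).1.le)
    have eC : ∀ ω, max (-(-(C ω))) 0 = C ω := fun ω => by
      rw [neg_neg]; exact max_eq_left (hCbd ω).1.le
    simp_rw [eA, eB, eC, integral_zero, mul_zero, zero_add] at h
    have hCpos : 0 < ∫ ω, C ω ∂μ := by
      rw [integral_pos_iff_support_of_nonneg (fun ω => (hCbd ω).1.le)
        (int_comp μ hC (fun ω => ⟨le_of_lt (lt_trans (neg_neg_of_pos hM) (hCbd ω).1),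
          (hCbd ω).2⟩) continuous_id)]
      have : Function.support C = Set.univ :=
        Set.eq_univ_of_forall fun ω => (hCbd ω).1.ne'
      rw [this, measure_univ]
      norm_num
    rcases mul_eq_zero.mp h.symm with h0 | h0
    · exact h0
    · exact absurd h0 hCpos.ne'
  have hc₁ : c₁ = 1 := by linarith
  refine ⟨hc₂, ?_⟩
  have keyAB : ∀ {g : ℝ → ℝ}, Continuous g → ∫ ω, g (A ω) ∂μ = ∫ ω, g (B ω) ∂μ := by
    intro g hg
    have := key hg
    rw [hc₁, hc₂] at this
    simpa using this
  haveI : IsProbabilityMeasure (Measure.map A μ) := Measure.isProbabilityMeasure_map hA.aemeasurable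
  haveI : IsProbabilityMeasure (Measure.map B μ) := Measure.isProbabilityMeasure_map hB.aemeasurable
  apply MeasureTheory.ext_of_forall_lintegral_eq_of_IsFiniteMeasure
  intro f
  have hfm : Measurable (fun x : ℝ => (f x : ℝ≥0∞)) :=
    measurable_coe_nnreal_ennreal.comp f.continuous.measurable
  rw [lintegral_map hfm hA, lintegral_map hfm hB]
  have hgc : Continuous (fun x : ℝ => ((f x : ℝ≥0) : ℝ)) :=
    NNReal.continuous_coe.comp f.continuous
  have hiA : Integrable (fun ω => ((f (A ω) : ℝ≥0) : ℝ)) μ := int_comp μ hA hrA hgc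
  have hiB : Integrable (fun ω => ((f (B ω) : ℝ≥0) : ℝ)) μ := int_comp μ hB hrB hgc
  rw [lintegral_coe_eq_integral (fun ω => f (A ω)) hiA,
    lintegral_coe_eq_integral (fun ω => f (B ω)) hiB, keyAB hgc]
end
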